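/- arXiv:2406.07413 — 9 statements merged into one kernel-verified Lean document; each statement's English description precedes it below -/
import Mathlib

section
/- Let X be a metric space, let p and q be probability measures on X, and let L : X → ℝ be a β-Lipschitz function that is integrable with respect to both p and q. Assume there exists at least one coupling γ of p and q for which (x, y) ↦ dist(x, y) is γ-integrable. Then |∫ L dp − ∫ L dq| ≤ β · W(p, q), where W(p, q) is the infimum of ∫ dist(x, y) dγ(x, y) over all couplings γ of p and q with γ-integrable distance function. -/
open MeasureTheory Pointwise

lemma key_coupling_bound
    {X : Type*} [MetricSpace X] [MeasurableSpace X] [BorelSpace X]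
    (p q : Measure X) (β : ℝ) (L : X → ℝ)
    (hL : ∀ x y, |L x - L y| ≤ β * dist x y)
    (hLp : Integrable L p) (hLq : Integrable L q)
    (γ : Measure (X × X))
    (h1 : γ.map Prod.fst = p) (h2 : γ.map Prod.snd = q)
    (hd : Integrable (fun z : X × X => dist z.1 z.2) γ) :
    |∫ x, L x ∂p - ∫ x, L x ∂q| ≤ β * ∫ z : X × X, dist z.1 z.2 ∂γ := by
  have hLip : LipschitzWith ⟨|β|, abs_nonneg β⟩ L := by
    apply LipschitzWith.of_dist_le_mul
    intro x y
    calc dist (L x) (L y) = |L x - L y| := Real.dist_eq _ _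
      _ ≤ β * dist x y := hL x y
      _ ≤ |β| * dist x y := by
          exact mul_le_mul_of_nonneg_right (le_abs_self β) dist_nonneg
  have hLm : StronglyMeasurable L := hLip.continuous.stronglyMeasurable
  have hint1 : Integrable (fun z : X × X => L z.1) γ := by
    rw [← h1] at hLp
    exact (integrable_map_measure hLm.aestronglyMeasurable
      measurable_fst.aemeasurable).mp hLp
  have hint2 : Integrable (fun z : X × X => L z.2) γ := by
    rw [← h2] at hLq
    exact (integrable_map_measure hLm.aestronglyMeasurable
      measurable_snd.aemeasurable).mp hLq
  have e1 : ∫ x, L x ∂p = ∫ z : X × X, L z.1 ∂γ := by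
    rw [← h1, integral_map measurable_fst.aemeasurable hLm.aestronglyMeasurable]
  have e2 : ∫ x, L x ∂q = ∫ z : X × X, L z.2 ∂γ := by
    rw [← h2, integral_map measurable_snd.aemeasurable hLm.aestronglyMeasurable]
  rw [e1, e2, ← integral_sub hint1 hint2]
  calc |∫ z : X × X, (L z.1 - L z.2) ∂γ| ≤ ∫ z : X × X, |L z.1 - L z.2| ∂γ :=
        by
        simpa [Real.norm_eq_abs] using
          norm_integral_le_integral_norm (fun z : X × X => L z.1 - L z.2)
    _ ≤ ∫ z : X × X, β * dist z.1 z.2 ∂γ := by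
        exact integral_mono (hint1.sub hint2).abs (hd.const_mul β) fun z => hL z.1 z.2
    _ = β * ∫ z : X × X, dist z.1 z.2 ∂γ := integral_const_mul β _

/-- If `L` is `β`-Lipschitz and integrable with respect to probability measures `p` and `q`,
and there is at least one coupling of `p` and `q` with integrable distance function, then
`|∫ L dp − ∫ L dq| ≤ β · W(p, q)`, where `W(p, q)` is the infimum of the transport costs
`∫ dist(x,y) dγ` over all couplings `γ` of `p` and `q` with integrable distance function. -/
theorem lipschitz_integral_diff_le_wasserstein
    {X : Type*} [MetricSpace X] [MeasurableSpace X] [BorelSpace X]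
    (p q : Measure X) [IsProbabilityMeasure p] [IsProbabilityMeasure q]
    (β : ℝ) (L : X → ℝ)
    (hL : ∀ x y, |L x - L y| ≤ β * dist x y)
    (hLp : Integrable L p) (hLq : Integrable L q)
    (hcoupling : ∃ γ : Measure (X × X), IsProbabilityMeasure γ ∧
      γ.map Prod.fst = p ∧ γ.map Prod.snd = q ∧
      Integrable (fun z : X × X => dist z.1 z.2) γ) :
    |∫ x, L x ∂p - ∫ x, L x ∂q| ≤
      β * sInf {c : ℝ | ∃ γ : Measure (X × X), IsProbabilityMeasure γ ∧
        γ.map Prod.fst = p ∧ γ.map Prod.snd = q ∧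
        Integrable (fun z : X × X => dist z.1 z.2) γ ∧
        c = ∫ z : X × X, dist z.1 z.2 ∂γ} := by
  set S : Set ℝ := {c : ℝ | ∃ γ : Measure (X × X), IsProbabilityMeasure γ ∧
        γ.map Prod.fst = p ∧ γ.map Prod.snd = q ∧
        Integrable (fun z : X × X => dist z.1 z.2) γ ∧
        c = ∫ z : X × X, dist z.1 z.2 ∂γ} with hS
  obtain ⟨γ₀, hγ₀, hm1, hm2, hd0⟩ := hcoupling
  have hne : S.Nonempty := ⟨_, γ₀, hγ₀, hm1, hm2, hd0, rfl⟩
  have hnonneg : ∀ c ∈ S, 0 ≤ c := by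
    rintro c ⟨γ, hγ, h1, h2, hd, rfl⟩
    exact integral_nonneg fun z => dist_nonneg
  have hkey : ∀ c ∈ S, |∫ x, L x ∂p - ∫ x, L x ∂q| ≤ β * c := by
    rintro c ⟨γ, hγ, h1, h2, hd, rfl⟩
    exact key_coupling_bound p q β L hL hLp hLq γ h1 h2 hd
  rcases le_or_gt 0 β with hβ | hβ
  · rw [← smul_eq_mul, ← Real.sInf_smul_of_nonneg hβ]
    apply le_csInf (hne.smul_set)
    rintro b ⟨c, hc, rfl⟩
    simpa [smul_eq_mul] using hkey c hc
  · -- β < 0 : the witness forces everything to be 0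
    obtain ⟨c₀, hc₀S⟩ := hne
    have h1 : |∫ x, L x ∂p - ∫ x, L x ∂q| ≤ β * c₀ := hkey c₀ hc₀S
    have hc₀ : 0 ≤ c₀ := hnonneg c₀ hc₀S
    have hbc : β * c₀ ≤ 0 := mul_nonpos_of_nonpos_of_nonneg hβ.le hc₀
    have habs : |∫ x, L x ∂p - ∫ x, L x ∂q| = 0 :=
      le_antisymm (h1.trans hbc) (abs_nonneg _)
    have hc₀0 : c₀ = 0 := by nlinarith [abs_nonneg (∫ x, L x ∂p - ∫ x, L x ∂q)]
    have hinf : sInf S = 0 := by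
      apply le_antisymm
      · exact (csInf_le ⟨0, hnonneg⟩ hc₀S).trans_eq hc₀0
      · exact le_csInf ⟨c₀, hc₀S⟩ hnonneg
    rw [habs, hinf, mul_zero]
end

section
/- Let p = N(μ₁, v₁) and q = N(μ₂, v₂) be real Gaussian measures with v₁, v₂ > 0, and write σ₁ = √v₁, σ₂ = √v₂. Then for every coupling γ of p and q (a probability measure on ℝ × ℝ with first marginal p and second marginal q), one has ∫ (x − y)² dγ(x, y) ≥ (μ₁ − μ₂)² + (σ₁ − σ₂)², where the left-hand integral is taken in the sense of the lower Lebesgue integral (so it may be infinite). -/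
/-!
Write `X, Y` for the two coordinates under the coupling. Expanding the square,
`E[(X - Y)²] = (E X - E Y)² + Var X + Var Y - 2 cov(X, Y)`, and Cauchy–Schwarz bounds the
covariance by `σ_X σ_Y`; hence `E[(X - Y)²] ≥ (E X - E Y)² + (σ_X - σ_Y)²` for any square
integrable `X, Y`. Only the means and variances of the marginals enter, and for Gaussian
marginals these are `μᵢ` and `vᵢ = σᵢ²`.
-/

open MeasureTheory ProbabilityTheory
open scoped NNReal ENNReal

namespace ProbabilityTheory

variable {Ω : Type*} {mΩ : MeasurableSpace Ω} {μ : Measure Ω} {X Y : Ω → ℝ}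

lemma covariance_le_sqrt_variance_mul_sqrt_variance [IsFiniteMeasure μ]
    (hX : MemLp X 2 μ) (hY : MemLp Y 2 μ) :
    cov[X, Y; μ] ≤ √Var[X; μ] * √Var[Y; μ] := by
  have hX' : MemLp (fun ω ↦ X ω - μ[X]) (ENNReal.ofReal 2) μ := by
    rw [ENNReal.ofReal_ofNat]
    exact hX.sub (memLp_const _)
  have hY' : MemLp (fun ω ↦ Y ω - μ[Y]) (ENNReal.ofReal 2) μ := by
    rw [ENNReal.ofReal_ofNat]
    exact hY.sub (memLp_const _)
  have integral_norm_rpow_two (Z : Ω → ℝ) (hZ : AEMeasurable Z μ) :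
      ∫ ω, ‖Z ω - μ[Z]‖ ^ (2 : ℝ) ∂μ = Var[Z; μ] := by
    simp only [variance_eq_integral hZ, Real.rpow_two, Real.norm_eq_abs, sq_abs]
  calc cov[X, Y; μ] ≤ ‖cov[X, Y; μ]‖ := Real.le_norm_self _
    _ ≤ ∫ ω, ‖X ω - μ[X]‖ * ‖Y ω - μ[Y]‖ ∂μ := by
      simpa only [covariance, norm_mul] using
        norm_integral_le_integral_norm fun ω ↦ (X ω - μ[X]) * (Y ω - μ[Y])
    _ ≤ (∫ ω, ‖X ω - μ[X]‖ ^ (2 : ℝ) ∂μ) ^ (1 / (2 : ℝ)) *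
          (∫ ω, ‖Y ω - μ[Y]‖ ^ (2 : ℝ) ∂μ) ^ (1 / (2 : ℝ)) :=
      integral_mul_norm_le_Lp_mul_Lq .two_two hX' hY'
    _ = √Var[X; μ] * √Var[Y; μ] := by
      rw [integral_norm_rpow_two X hX.aemeasurable, integral_norm_rpow_two Y hY.aemeasurable,
        ← Real.sqrt_eq_rpow, ← Real.sqrt_eq_rpow]

lemma sq_sqrt_variance_sub_sqrt_variance_le_variance_sub [IsFiniteMeasure μ]
    (hX : MemLp X 2 μ) (hY : MemLp Y 2 μ) :
    (√Var[X; μ] - √Var[Y; μ]) ^ 2 ≤ Var[X - Y; μ] := by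
  rw [variance_sub hX hY, sub_sq, Real.sq_sqrt (variance_nonneg X μ),
    Real.sq_sqrt (variance_nonneg Y μ)]
  linarith [covariance_le_sqrt_variance_mul_sqrt_variance hX hY]

lemma integral_sq_sub_eq_sq_sub_integral_add_variance [IsProbabilityMeasure μ]
    (hX : MemLp X 2 μ) (hY : MemLp Y 2 μ) :
    ∫ ω, (X ω - Y ω) ^ 2 ∂μ = (μ[X] - μ[Y]) ^ 2 + Var[X - Y; μ] := by
  rw [variance_eq_sub (hX.sub hY)]
  simp only [Pi.pow_apply, Pi.sub_apply]
  rw [integral_sub (hX.integrable one_le_two) (hY.integrable one_le_two)]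
  ring

lemma sq_sub_integral_add_sq_sub_sqrt_variance_le_integral_sq_sub [IsProbabilityMeasure μ]
    (hX : MemLp X 2 μ) (hY : MemLp Y 2 μ) :
    (μ[X] - μ[Y]) ^ 2 + (√Var[X; μ] - √Var[Y; μ]) ^ 2 ≤ ∫ ω, (X ω - Y ω) ^ 2 ∂μ := by
  rw [integral_sq_sub_eq_sq_sub_integral_add_variance hX hY]
  linarith [sq_sqrt_variance_sub_sqrt_variance_le_variance_sub hX hY]

lemma HasLaw.memLp {E : Type*} [NormedAddCommGroup E] {mE : MeasurableSpace E}
    {ν : Measure E} {Z : Ω → E} {p : ℝ≥0∞} (hZ : HasLaw Z ν μ) (h : MemLp id p ν) :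
    MemLp Z p μ :=
  (hZ.map_eq ▸ h).comp_of_map hZ.aemeasurable

end ProbabilityTheory

theorem gaussian_coupling_quadratic_cost_lower_bound_general
    (μ₁ μ₂ : ℝ) (v₁ v₂ : ℝ≥0)
    (σ₁ σ₂ : ℝ) (hσ₁ : σ₁ = Real.sqrt v₁) (hσ₂ : σ₂ = Real.sqrt v₂)
    (γ : Measure (ℝ × ℝ)) [IsProbabilityMeasure γ]
    (hγ₁ : γ.map Prod.fst = gaussianReal μ₁ v₁)
    (hγ₂ : γ.map Prod.snd = gaussianReal μ₂ v₂) :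
    ENNReal.ofReal ((μ₁ - μ₂) ^ 2 + (σ₁ - σ₂) ^ 2) ≤
      ∫⁻ z : ℝ × ℝ, ENNReal.ofReal ((z.1 - z.2) ^ 2) ∂γ := by
  have h₁ : HasLaw Prod.fst (gaussianReal μ₁ v₁) γ := ⟨measurable_fst.aemeasurable, hγ₁⟩
  have h₂ : HasLaw Prod.snd (gaussianReal μ₂ v₂) γ := ⟨measurable_snd.aemeasurable, hγ₂⟩
  have hX : MemLp Prod.fst 2 γ := h₁.memLp (memLp_id_gaussianReal 2)
  have hY : MemLp Prod.snd 2 γ := h₂.memLp (memLp_id_gaussianReal 2)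
  have key := sq_sub_integral_add_sq_sub_sqrt_variance_le_integral_sq_sub hX hY
  rw [h₁.integral_eq, h₂.integral_eq, h₁.variance_eq, h₂.variance_eq, integral_id_gaussianReal,
    integral_id_gaussianReal, variance_id_gaussianReal, variance_id_gaussianReal, ← hσ₁,
    ← hσ₂] at key
  rw [← ofReal_integral_eq_lintegral_ofReal (f := fun z : ℝ × ℝ ↦ (z.1 - z.2) ^ 2)
    (hX.sub hY).integrable_sq (ae_of_all _ fun _ ↦ sq_nonneg _)]
  exact ENNReal.ofReal_le_ofReal key

/-- For Gaussians `p = N(μ₁, v₁)` and `q = N(μ₂, v₂)` with `σᵢ = √vᵢ`, every coupling `γ`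
of `p` and `q` has quadratic transport cost (lower Lebesgue integral, possibly infinite)
at least `(μ₁ − μ₂)² + (σ₁ − σ₂)²`. -/
theorem gaussian_coupling_quadratic_cost_lower_bound
    (μ₁ μ₂ : ℝ) (v₁ v₂ : ℝ≥0) (hv₁ : 0 < v₁) (hv₂ : 0 < v₂)
    (σ₁ σ₂ : ℝ) (hσ₁ : σ₁ = Real.sqrt v₁) (hσ₂ : σ₂ = Real.sqrt v₂)
    (γ : Measure (ℝ × ℝ)) [IsProbabilityMeasure γ]
    (hγ₁ : γ.map Prod.fst = gaussianReal μ₁ v₁)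
    (hγ₂ : γ.map Prod.snd = gaussianReal μ₂ v₂) :
    ENNReal.ofReal ((μ₁ - μ₂) ^ 2 + (σ₁ - σ₂) ^ 2) ≤
      ∫⁻ z : ℝ × ℝ, ENNReal.ofReal ((z.1 - z.2) ^ 2) ∂γ :=
  gaussian_coupling_quadratic_cost_lower_bound_general μ₁ μ₂ v₁ v₂ σ₁ σ₂ hσ₁ hσ₂ γ hγ₁ hγ₂
end

section
/- Let μ₁, μ₂ ∈ ℝ and σ₁, σ₂ ≥ 0, and set v₁ = σ₁², v₂ = σ₂². Define T : ℝ → ℝ × ℝ by T(z) = (μ₁ + σ₁·z, μ₂ + σ₂·z), and let γ be the pushforward of the standard Gaussian measure N(0, 1) under T. Then γ is a coupling of N(μ₁, v₁) and N(μ₂, v₂) (its first marginal is N(μ₁, v₁) and its second marginal is N(μ₂, v₂)), and ∫ (x − y)² dγ(x, y) = (μ₁ − μ₂)² + (σ₁ − σ₂)². Consequently the squared 2-Wasserstein distance between the two Gaussians equals (μ₁ − μ₂)² + (σ₁ − σ₂)². -/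
/-!
If `X` and `Y` have laws `N(μ₁, σ₁²)` and `N(μ₂, σ₂²)` on a common probability space, then
`E (X - Y)² = (μ₁ - μ₂)² + σ₁² - 2 cov(X, Y) + σ₂²`, and Cauchy–Schwarz `cov(X, Y) ≤ σ₁ σ₂` bounds
it below by `(μ₁ - μ₂)² + (σ₁ - σ₂)²`. The comonotone coupling `(μ₁ + σ₁ Z, μ₂ + σ₂ Z)` attains
the bound: its difference `(μ₁ - μ₂) + (σ₁ - σ₂) Z` is `N(μ₁ - μ₂, (σ₁ - σ₂)²)`, whose second moment
is exactly that.
-/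

open MeasureTheory ProbabilityTheory
open scoped NNReal

namespace ProbabilityTheory

variable {Ω : Type*} {mΩ : MeasurableSpace Ω} {P : Measure Ω} {X Y : Ω → ℝ}

-- Cauchy–Schwarz: `t ↦ Var[X + t Y]` is a nonnegative quadratic, so its discriminant is `≤ 0`.
lemma covariance_sq_le_variance_mul [IsFiniteMeasure P] (hX : MemLp X 2 P) (hY : MemLp Y 2 P) :
    cov[X, Y; P] ^ 2 ≤ Var[X; P] * Var[Y; P] := by
  have hquad : ∀ t : ℝ, 0 ≤ Var[Y; P] * (t * t) + 2 * cov[X, Y; P] * t + Var[X; P] := by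
    intro t
    have h := variance_nonneg (fun ω ↦ X ω + t * Y ω) P
    rw [variance_fun_add hX (hY.const_mul t), variance_const_mul,
      covariance_const_mul_right] at h
    linarith
  have h := discrim_le_zero hquad
  rw [discrim] at h
  linarith

lemma integral_sub_sq_eq [IsProbabilityMeasure P] (hX : MemLp X 2 P) (hY : MemLp Y 2 P) :
    ∫ ω, (X ω - Y ω) ^ 2 ∂P
      = (P[X] - P[Y]) ^ 2 + (Var[X; P] - 2 * cov[X, Y; P] + Var[Y; P]) := by
  have h := variance_eq_sub (hX.sub hY)
  simp only [Pi.pow_apply, Pi.sub_apply] at h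
  rw [variance_sub hX hY, integral_sub (hX.integrable one_le_two) (hY.integrable one_le_two)] at h
  linarith

lemma sq_integral_sub_add_sq_sqrt_variance_sub_le [IsProbabilityMeasure P]
    (hX : MemLp X 2 P) (hY : MemLp Y 2 P) :
    (P[X] - P[Y]) ^ 2 + (√Var[X; P] - √Var[Y; P]) ^ 2 ≤ ∫ ω, (X ω - Y ω) ^ 2 ∂P := by
  have hcov : cov[X, Y; P] ≤ √Var[X; P] * √Var[Y; P] := by
    rw [← Real.sqrt_mul (variance_nonneg X P)]
    exact (le_abs_self _).trans (Real.abs_le_sqrt (covariance_sq_le_variance_mul hX hY))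
  rw [integral_sub_sq_eq hX hY]
  linarith [Real.sq_sqrt (variance_nonneg X P), Real.sq_sqrt (variance_nonneg Y P)]

lemma HasLaw.memLp_two_of_gaussianReal {μ : ℝ} {v : ℝ≥0} (hX : HasLaw X (gaussianReal μ v) P) :
    MemLp X 2 P := by
  have h := memLp_id_gaussianReal (μ := μ) (v := v) 2
  rw [← hX.map_eq, memLp_map_measure_iff (by fun_prop) hX.aemeasurable] at h
  exact h

lemma integral_sq_gaussianReal (μ : ℝ) (v : ℝ≥0) : ∫ x, x ^ 2 ∂gaussianReal μ v = μ ^ 2 + v := by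
  have h := variance_eq_sub (memLp_id_gaussianReal (μ := μ) (v := v) 2)
  simp only [Pi.pow_apply, id_eq] at h
  rw [variance_id_gaussianReal, integral_id_gaussianReal] at h
  linarith

lemma hasLaw_const_add_mul_gaussianReal (m s : ℝ) {v : ℝ≥0} (hv : (v : ℝ) = s ^ 2) :
    HasLaw (fun z ↦ m + s * z) (gaussianReal m v) (gaussianReal 0 1) := by
  have h := gaussianReal_const_add (gaussianReal_const_mul (HasLaw.id (μ := gaussianReal 0 1)) s) m
  convert h using 2 <;> simp [← NNReal.coe_inj, hv]

lemma le_integral_sub_sq_of_hasLaw_gaussianReal {μ₁ μ₂ : ℝ} {v₁ v₂ : ℝ≥0}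
    (hX : HasLaw X (gaussianReal μ₁ v₁) P) (hY : HasLaw Y (gaussianReal μ₂ v₂) P) :
    (μ₁ - μ₂) ^ 2 + (√v₁ - √v₂) ^ 2 ≤ ∫ ω, (X ω - Y ω) ^ 2 ∂P := by
  have := hX.isProbabilityMeasure
  have h := sq_integral_sub_add_sq_sqrt_variance_sub_le hX.memLp_two_of_gaussianReal
    hY.memLp_two_of_gaussianReal
  rwa [hX.integral_eq, hY.integral_eq, hX.variance_eq, hY.variance_eq, integral_id_gaussianReal,
    integral_id_gaussianReal, variance_id_gaussianReal, variance_id_gaussianReal] at h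

end ProbabilityTheory

/-- Let `T z = (μ₁ + σ₁ z, μ₂ + σ₂ z)` with `σ₁, σ₂ ≥ 0`, and let `γ` be the pushforward of
the standard Gaussian `N(0,1)` under `T`. Then `γ` is a coupling of `N(μ₁, σ₁²)` and
`N(μ₂, σ₂²)`, its quadratic transport cost equals `(μ₁ − μ₂)² + (σ₁ − σ₂)²`, and consequently
the squared 2-Wasserstein distance between the two Gaussians (the infimum of the quadratic
transport costs over all couplings with integrable quadratic cost) equals
`(μ₁ − μ₂)² + (σ₁ − σ₂)²`. -/
theorem gaussian_wasserstein_sq_eq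
    (μ₁ μ₂ : ℝ) (σ₁ σ₂ : ℝ) (hσ₁ : 0 ≤ σ₁) (hσ₂ : 0 ≤ σ₂)
    (v₁ v₂ : ℝ≥0) (hv₁ : (v₁ : ℝ) = σ₁ ^ 2) (hv₂ : (v₂ : ℝ) = σ₂ ^ 2)
    (T : ℝ → ℝ × ℝ) (hT : T = fun z => (μ₁ + σ₁ * z, μ₂ + σ₂ * z))
    (γ : Measure (ℝ × ℝ)) (hγ : γ = (gaussianReal 0 1).map T) :
    γ.map Prod.fst = gaussianReal μ₁ v₁ ∧
    γ.map Prod.snd = gaussianReal μ₂ v₂ ∧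
    (∫ z : ℝ × ℝ, (z.1 - z.2) ^ 2 ∂γ) = (μ₁ - μ₂) ^ 2 + (σ₁ - σ₂) ^ 2 ∧
    sInf {c : ℝ | ∃ γ' : Measure (ℝ × ℝ), IsProbabilityMeasure γ' ∧
        γ'.map Prod.fst = gaussianReal μ₁ v₁ ∧
        γ'.map Prod.snd = gaussianReal μ₂ v₂ ∧
        Integrable (fun z : ℝ × ℝ => (z.1 - z.2) ^ 2) γ' ∧
        c = ∫ z : ℝ × ℝ, (z.1 - z.2) ^ 2 ∂γ'} =
      (μ₁ - μ₂) ^ 2 + (σ₁ - σ₂) ^ 2 := by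
  have hT_law : HasLaw T γ (gaussianReal 0 1) := ⟨by rw [hT]; fun_prop, hγ.symm⟩
  have h_fst : HasLaw Prod.fst (gaussianReal μ₁ v₁) γ :=
    hT_law.comp_of_hasLaw_comp measurable_fst.aemeasurable HasLaw.id
      (hT ▸ hasLaw_const_add_mul_gaussianReal μ₁ σ₁ hv₁)
  have h_snd : HasLaw Prod.snd (gaussianReal μ₂ v₂) γ :=
    hT_law.comp_of_hasLaw_comp measurable_snd.aemeasurable HasLaw.id
      (hT ▸ hasLaw_const_add_mul_gaussianReal μ₂ σ₂ hv₂)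
  have h_diff : HasLaw (fun z : ℝ × ℝ ↦ z.1 - z.2)
      (gaussianReal (μ₁ - μ₂) ⟨(σ₁ - σ₂) ^ 2, sq_nonneg _⟩) γ := by
    refine hT_law.comp_of_hasLaw_comp (f := fun z : ℝ × ℝ ↦ z.1 - z.2) (by fun_prop) HasLaw.id ?_
    convert hasLaw_const_add_mul_gaussianReal (μ₁ - μ₂) (σ₁ - σ₂)
      (v := ⟨(σ₁ - σ₂) ^ 2, sq_nonneg _⟩) rfl using 2 with z
    rw [hT]; ring
  have h_cost : ∫ z : ℝ × ℝ, (z.1 - z.2) ^ 2 ∂γ = (μ₁ - μ₂) ^ 2 + (σ₁ - σ₂) ^ 2 :=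
    (h_diff.integral_comp (f := (· ^ 2)) (by fun_prop)).trans (integral_sq_gaussianReal _ _)
  refine ⟨h_fst.map_eq, h_snd.map_eq, h_cost, IsLeast.csInf_eq ⟨?_, ?_⟩⟩
  · exact ⟨γ, h_fst.isProbabilityMeasure, h_fst.map_eq, h_snd.map_eq,
      h_diff.memLp_two_of_gaussianReal.integrable_sq, h_cost.symm⟩
  · rintro _ ⟨γ', -, h_fst', h_snd', -, rfl⟩
    have h := le_integral_sub_sq_of_hasLaw_gaussianReal ⟨measurable_fst.aemeasurable, h_fst'⟩
      ⟨measurable_snd.aemeasurable, h_snd'⟩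
    rwa [hv₁, hv₂, Real.sqrt_sq hσ₁, Real.sqrt_sq hσ₂] at h
end

section
/- Let U be a finite type and f : Finset U → ℝ a monotone and submodular set function. Then for all finite sets S, T ⊆ U, f(S ∪ T) − f(S) ≤ Σ_{x ∈ T \ S} (f(S ∪ {x}) − f(S)). -/
/-- For a monotone submodular set function `f` on a finite type `U` and finite sets `S, T`,
`f(S ∪ T) − f(S) ≤ Σ_{x ∈ T \ S} (f(S ∪ {x}) − f(S))`. -/
theorem submodular_union_sub_le_sum_marginal_gains
    {U : Type*} [Fintype U] [DecidableEq U] (f : Finset U → ℝ)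
    (hmono : ∀ A B : Finset U, A ⊆ B → f A ≤ f B)
    (hsub : ∀ A B : Finset U, A ⊆ B → ∀ x ∉ B,
      f (B ∪ {x}) - f B ≤ f (A ∪ {x}) - f A)
    (S T : Finset U) :
    f (S ∪ T) - f S ≤ ∑ x ∈ T \ S, (f (S ∪ {x}) - f S) := by
  induction T using Finset.induction_on with
  | empty => simp
  | @insert a T' ha ih =>
    by_cases haS : a ∈ S
    · have h1 : S ∪ insert a T' = S ∪ T' := by
        ext x; aesop
      have h2 : insert a T' \ S = T' \ S := by
        ext x; aesop
      rw [h1, h2]; exact ih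
    · have haTS : a ∉ T' \ S := by simp [ha]
      have h2 : insert a T' \ S = insert a (T' \ S) := by
        ext x; aesop
      rw [h2, Finset.sum_insert haTS]
      have haB : a ∉ S ∪ T' := by simp [ha, haS]
      have key := hsub S (S ∪ T') (Finset.subset_union_left) a haB
      have h3 : S ∪ insert a T' = (S ∪ T') ∪ {a} := by
        ext x; aesop
      rw [h3]
      linarith
end

section
/- Let U be a finite type and f : Finset U → ℝ a monotone and submodular set function. Then for every finite set S ⊆ U and every nonempty finite set T ⊆ U there exists x ∈ T such that f(S ∪ {x}) − f(S) ≥ (f(S ∪ T) − f(S)) / |T|. In particular, the largest single-element marginal gain over T is at least the average marginal gain 1/|T| · Σ_{o ∈ T} (f(S ∪ {o}) − f(S)) whenever the latter lower-bounds (f(S ∪ T) − f(S))/|T|. -/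
private lemma submodular_sum_marginal
    {U : Type*} [Fintype U] [DecidableEq U] (f : Finset U → ℝ)
    (hmono : ∀ A B : Finset U, A ⊆ B → f A ≤ f B)
    (hsub : ∀ A B : Finset U, A ⊆ B → ∀ x ∉ B,
      f (B ∪ {x}) - f B ≤ f (A ∪ {x}) - f A)
    (S : Finset U) : ∀ T : Finset U,
    f (S ∪ T) - f S ≤ ∑ x ∈ T, (f (S ∪ {x}) - f S) := by
  intro T
  induction T using Finset.induction_on with
  | empty => simp
  | @insert a T' ha ih =>
    rw [Finset.sum_insert ha]
    have hstep : f (S ∪ insert a T') - f (S ∪ T') ≤ f (S ∪ {a}) - f S := by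
      by_cases haS : a ∈ S ∪ T'
      · have : S ∪ insert a T' = S ∪ T' := by
          rw [Finset.insert_eq]
          rw [Finset.union_comm ({a}) T', ← Finset.union_assoc]
          rw [Finset.union_eq_left.mpr]
          simpa using haS
        rw [this]
        have := hmono S (S ∪ {a}) Finset.subset_union_left
        linarith
      · have h := hsub S (S ∪ T') Finset.subset_union_left a haS
        have : (S ∪ T') ∪ {a} = S ∪ insert a T' := by
          rw [Finset.insert_eq, Finset.union_assoc, Finset.union_comm ({a}) T',
            ← Finset.union_assoc, Finset.union_assoc]
        rw [this] at h
        exact h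
    linarith

/-- For a monotone submodular set function `f`, any finite `S` and nonempty finite `T`, some
element of `T` has marginal gain at least `(f(S ∪ T) − f(S)) / |T|`. In particular, the
largest single-element marginal gain over `T` is at least the average marginal gain
`1/|T| · Σ_{o ∈ T} (f(S ∪ {o}) − f(S))` whenever the latter lower-bounds
`(f(S ∪ T) − f(S)) / |T|`. -/
theorem submodular_exists_marginal_gain_ge_average
    {U : Type*} [Fintype U] [DecidableEq U] (f : Finset U → ℝ)
    (hmono : ∀ A B : Finset U, A ⊆ B → f A ≤ f B)
    (hsub : ∀ A B : Finset U, A ⊆ B → ∀ x ∉ B,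
      f (B ∪ {x}) - f B ≤ f (A ∪ {x}) - f A)
    (S T : Finset U) (hT : T.Nonempty) :
    (∃ x ∈ T, (f (S ∪ T) - f S) / (T.card : ℝ) ≤ f (S ∪ {x}) - f S) ∧
    ((1 / (T.card : ℝ)) * ∑ o ∈ T, (f (S ∪ {o}) - f S) ≤ (f (S ∪ T) - f S) / (T.card : ℝ) →
      ∃ x ∈ T, (∀ y ∈ T, f (S ∪ {y}) - f S ≤ f (S ∪ {x}) - f S) ∧
        (1 / (T.card : ℝ)) * ∑ o ∈ T, (f (S ∪ {o}) - f S) ≤ f (S ∪ {x}) - f S) := by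
  have hcard : (0 : ℝ) < (T.card : ℝ) := by
    exact_mod_cast Finset.card_pos.mpr hT
  obtain ⟨x, hxT, hxmax⟩ := T.exists_max_image (fun y => f (S ∪ {y}) - f S) hT
  have hsum : f (S ∪ T) - f S ≤ ∑ o ∈ T, (f (S ∪ {o}) - f S) :=
    submodular_sum_marginal f hmono hsub S T
  have hsummax : ∑ o ∈ T, (f (S ∪ {o}) - f S) ≤ (T.card : ℝ) * (f (S ∪ {x}) - f S) := by
    calc ∑ o ∈ T, (f (S ∪ {o}) - f S) ≤ ∑ _o ∈ T, (f (S ∪ {x}) - f S) :=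
          Finset.sum_le_sum (fun y hy => hxmax y hy)
      _ = (T.card : ℝ) * (f (S ∪ {x}) - f S) := by
          rw [Finset.sum_const, nsmul_eq_mul]
  have havg : (1 / (T.card : ℝ)) * ∑ o ∈ T, (f (S ∪ {o}) - f S) ≤ f (S ∪ {x}) - f S := by
    rw [div_mul_eq_mul_div, one_mul, div_le_iff₀ hcard]
    linarith [hsummax]
  constructor
  · refine ⟨x, hxT, ?_⟩
    rw [div_le_iff₀ hcard]
    calc f (S ∪ T) - f S ≤ ∑ o ∈ T, (f (S ∪ {o}) - f S) := hsum
      _ ≤ (T.card : ℝ) * (f (S ∪ {x}) - f S) := hsummax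
      _ = (f (S ∪ {x}) - f S) * (T.card : ℝ) := mul_comm _ _
  · intro _
    exact ⟨x, hxT, hxmax, havg⟩
end

section
/- Let U be a finite type, f : Finset U → ℝ monotone and submodular, and let OPT ⊆ U be a finite set with |OPT| = m ≥ 1. Suppose S ⊆ U is a finite set and x* ∈ U is a greedy choice at S, i.e., f(S ∪ {x*}) − f(S) ≥ f(S ∪ {y}) − f(S) for all y ∈ U. Then f(OPT) − f(S ∪ {x*}) ≤ (1 − 1/m) · (f(OPT) − f(S)). -/
lemma submodular_sum_bound
    {U : Type*} [Fintype U] [DecidableEq U] (f : Finset U → ℝ)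
    (hsub : ∀ A B : Finset U, A ⊆ B → ∀ x ∉ B,
      f (B ∪ {x}) - f B ≤ f (A ∪ {x}) - f A)
    (S : Finset U) :
    ∀ T : Finset U, f (S ∪ T) - f S ≤ ∑ y ∈ T, (f (S ∪ {y}) - f S) := by
  intro T
  induction T using Finset.induction_on with
  | empty => simp
  | @insert a T ha ih =>
    rw [Finset.sum_insert ha]
    have key : f (S ∪ insert a T) - f (S ∪ T) ≤ f (S ∪ {a}) - f S := by
      by_cases haS : a ∈ S
      · have h1 : S ∪ insert a T = S ∪ T := by
          ext x; simp only [Finset.mem_union, Finset.mem_insert]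
          constructor
          · rintro (h | h | h) <;> simp_all
          · tauto
        have h2 : S ∪ {a} = S := Finset.union_eq_left.mpr (Finset.singleton_subset_iff.mpr haS)
        rw [h1, h2]; linarith
      · have haST : a ∉ S ∪ T := by
          simp only [Finset.mem_union]; tauto
        have h2 : S ∪ insert a T = (S ∪ T) ∪ {a} := by
          rw [Finset.insert_eq]; ac_rfl
        rw [h2]
        exact hsub S (S ∪ T) Finset.subset_union_left a haST
    linarith

/-- One-step greedy progress: if `f` is monotone and submodular, `|OPT| = m ≥ 1`, and `x*` is
a greedy choice at `S`, then `f(OPT) − f(S ∪ {x*}) ≤ (1 − 1/m) · (f(OPT) − f(S))`. -/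
theorem submodular_greedy_step
    {U : Type*} [Fintype U] [DecidableEq U] (f : Finset U → ℝ)
    (hmono : ∀ A B : Finset U, A ⊆ B → f A ≤ f B)
    (hsub : ∀ A B : Finset U, A ⊆ B → ∀ x ∉ B,
      f (B ∪ {x}) - f B ≤ f (A ∪ {x}) - f A)
    (OPT : Finset U) (m : ℕ) (hOPT : OPT.card = m) (hm : 1 ≤ m)
    (S : Finset U) (xstar : U)
    (hgreedy : ∀ y : U, f (S ∪ {y}) - f S ≤ f (S ∪ {xstar}) - f S) :
    f OPT - f (S ∪ {xstar}) ≤ (1 - 1 / (m : ℝ)) * (f OPT - f S) := by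
  set g := f (S ∪ {xstar}) - f S with hg
  have hg0 : 0 ≤ g := by
    have := hgreedy xstar
    have h2 : f S ≤ f (S ∪ {xstar}) := hmono S (S ∪ {xstar}) Finset.subset_union_left
    linarith
  have hT : f OPT - f S ≤ (m : ℝ) * g := by
    have h1 : f OPT ≤ f (S ∪ (OPT \ S)) := by
      apply hmono
      intro x hx
      by_cases hxS : x ∈ S
      · exact Finset.mem_union_left _ hxS
      · exact Finset.mem_union_right _ (Finset.mem_sdiff.mpr ⟨hx, hxS⟩)
    have h2 := submodular_sum_bound f hsub S (OPT \ S)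
    have h3 : ∑ y ∈ OPT \ S, (f (S ∪ {y}) - f S) ≤ ((OPT \ S).card : ℝ) * g := by
      calc ∑ y ∈ OPT \ S, (f (S ∪ {y}) - f S) ≤ ∑ _y ∈ OPT \ S, g :=
            Finset.sum_le_sum (fun y _ => hgreedy y)
        _ = ((OPT \ S).card : ℝ) * g := by rw [Finset.sum_const, nsmul_eq_mul]
    have h4 : ((OPT \ S).card : ℝ) ≤ (m : ℝ) := by
      have : (OPT \ S).card ≤ OPT.card := Finset.card_le_card (Finset.sdiff_subset)
      exact_mod_cast hOPT ▸ this
    have h5 : ((OPT \ S).card : ℝ) * g ≤ (m : ℝ) * g := by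
      exact mul_le_mul_of_nonneg_right h4 hg0
    linarith
  have hmpos : (0 : ℝ) < m := by exact_mod_cast hm
  have hgey : g ≥ (f OPT - f S) / m := by
    rw [ge_iff_le, div_le_iff₀ hmpos]
    linarith
  have : f OPT - f (S ∪ {xstar}) = (f OPT - f S) - g := by rw [hg]; ring
  rw [this]
  have : (1 - 1 / (m : ℝ)) * (f OPT - f S) = (f OPT - f S) - (f OPT - f S) / m := by
    field_simp
  rw [this]
  linarith
end

section
/- Let U be a finite type, f : Finset U → ℝ monotone and submodular with f(∅) = 0, and let OPT ⊆ U be a finite set with |OPT| = m ≥ 1. Let (S_k)_{k ≥ 0} be a greedy sequence: S_0 = ∅ and for each k, S_{k+1} = S_k ∪ {x_k} where x_k satisfies f(S_k ∪ {x_k}) − f(S_k) ≥ f(S_k ∪ {y}) − f(S_k) for all y ∈ U. Then for every k ≥ 0, f(S_k) ≥ (1 − (1 − 1/m)^k) · f(OPT). -/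
/-!
Each greedy step closes at least a `1 / m` fraction of the gap `f OPT - f (S k)`: by
monotonicity and submodularity the gap is at most the sum of the marginal gains of the `m`
elements of `OPT` over `S k`, and each of these is at most the greedy gain. Hence the gap
decays geometrically with ratio `1 - 1 / m`.
-/

section Submodular

variable {U : Type*} [DecidableEq U] (f : Finset U → ℝ)

theorem sub_le_sum_marginal_of_submodular
    (hsub : ∀ A B : Finset U, A ⊆ B → ∀ x ∉ B, f (B ∪ {x}) - f B ≤ f (A ∪ {x}) - f A)
    (A T : Finset U) : f (A ∪ T) - f A ≤ ∑ y ∈ T, (f (A ∪ {y}) - f A) := by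
  induction T using Finset.induction_on with
  | empty => simp
  | insert y T hyT ih =>
    have hunion : A ∪ insert y T = A ∪ T ∪ {y} := by
      rw [Finset.union_insert, Finset.insert_eq, Finset.union_comm {y}]
    have hmarginal : f (A ∪ T ∪ {y}) - f (A ∪ T) ≤ f (A ∪ {y}) - f A := by
      by_cases hyA : y ∈ A
      · simp only [Finset.union_singleton, Finset.insert_eq_of_mem hyA,
          Finset.insert_eq_of_mem (Finset.mem_union_left T hyA), sub_self, le_refl]
      · exact hsub A (A ∪ T) Finset.subset_union_left y (by simp [hyA, hyT])
    rw [hunion, Finset.sum_insert hyT]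
    linarith

theorem sub_le_card_mul_of_greedy
    (hmono : ∀ A B : Finset U, A ⊆ B → f A ≤ f B)
    (hsub : ∀ A B : Finset U, A ⊆ B → ∀ x ∉ B, f (B ∪ {x}) - f B ≤ f (A ∪ {x}) - f A)
    {A : Finset U} {x : U} (hgreedy : ∀ y, f (A ∪ {y}) - f A ≤ f (A ∪ {x}) - f A)
    (B : Finset U) : f B - f A ≤ B.card * (f (A ∪ {x}) - f A) :=
  calc f B - f A ≤ f (A ∪ B) - f A := by gcongr; exact hmono _ _ Finset.subset_union_right
    _ ≤ ∑ y ∈ B, (f (A ∪ {y}) - f A) := sub_le_sum_marginal_of_submodular f hsub A B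
    _ ≤ ∑ _y ∈ B, (f (A ∪ {x}) - f A) := Finset.sum_le_sum fun y _ => hgreedy y
    _ = B.card * (f (A ∪ {x}) - f A) := by rw [Finset.sum_const, nsmul_eq_mul]

end Submodular

theorem le_one_sub_inv_mul_of_le_mul_sub {a b m : ℝ} (hm : 0 < m) (h : a ≤ m * (a - b)) :
    b ≤ (1 - 1 / m) * a := by
  rw [sub_mul, one_mul, one_div_mul_eq_div, le_sub_comm, div_le_iff₀' hm]
  exact h

theorem submodular_greedy_sequence_bound_general
    {U : Type*} [DecidableEq U] (f : Finset U → ℝ)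
    (hmono : ∀ A B : Finset U, A ⊆ B → f A ≤ f B)
    (hsub : ∀ A B : Finset U, A ⊆ B → ∀ x ∉ B,
      f (B ∪ {x}) - f B ≤ f (A ∪ {x}) - f A)
    (hempty : f ∅ = 0)
    (OPT : Finset U) (m : ℕ) (hOPT : OPT.card = m) (hm : 1 ≤ m)
    (S : ℕ → Finset U) (x : ℕ → U)
    (hS0 : S 0 = ∅)
    (hSsucc : ∀ k, S (k + 1) = S k ∪ {x k})
    (hgreedy : ∀ k, ∀ y : U, f (S k ∪ {y}) - f (S k) ≤ f (S k ∪ {x k}) - f (S k)) :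
    ∀ k, (1 - (1 - 1 / (m : ℝ)) ^ k) * f OPT ≤ f (S k) := by
  intro k
  have hm_pos : (0 : ℝ) < m := by exact_mod_cast hm
  have hratio : 0 ≤ 1 - 1 / (m : ℝ) :=
    sub_nonneg.2 ((div_le_one hm_pos).2 (by exact_mod_cast hm))
  have hgap : ∀ j, f OPT - f (S (j + 1)) ≤ (1 - 1 / (m : ℝ)) * (f OPT - f (S j)) := by
    intro j
    apply le_one_sub_inv_mul_of_le_mul_sub hm_pos
    have := sub_le_card_mul_of_greedy f hmono hsub (hgreedy j) OPT
    rw [hOPT, ← hSsucc] at this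
    linarith
  have := le_geom (u := fun j => f OPT - f (S j)) hratio k fun j _ => hgap j
  simp only [hS0, hempty, sub_zero] at this
  linarith

/-- If `f` is monotone, submodular, and `f(∅) = 0`, `|OPT| = m ≥ 1`, and `(S k)` is a greedy
sequence, then for every `k`, `f(S k) ≥ (1 − (1 − 1/m)^k) · f(OPT)`. -/
theorem submodular_greedy_sequence_bound
    {U : Type*} [Fintype U] [DecidableEq U] (f : Finset U → ℝ)
    (hmono : ∀ A B : Finset U, A ⊆ B → f A ≤ f B)
    (hsub : ∀ A B : Finset U, A ⊆ B → ∀ x ∉ B,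
      f (B ∪ {x}) - f B ≤ f (A ∪ {x}) - f A)
    (hempty : f ∅ = 0)
    (OPT : Finset U) (m : ℕ) (hOPT : OPT.card = m) (hm : 1 ≤ m)
    (S : ℕ → Finset U) (x : ℕ → U)
    (hS0 : S 0 = ∅)
    (hSsucc : ∀ k, S (k + 1) = S k ∪ {x k})
    (hgreedy : ∀ k, ∀ y : U, f (S k ∪ {y}) - f (S k) ≤ f (S k ∪ {x k}) - f (S k)) :
    ∀ k, (1 - (1 - 1 / (m : ℝ)) ^ k) * f OPT ≤ f (S k) :=
  submodular_greedy_sequence_bound_general f hmono hsub hempty OPT m hOPT hm S x hS0 hSsucc hgreedy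
end

section
/- (Evidence Lower Bound.) Let p and q be probability measures on a measurable space X with q absolutely continuous with respect to p, and let f : X → ℝ be a measurable function with f(x) > 0 for all x. Assume f is integrable with respect to p, log ∘ f is integrable with respect to q, and the Kullback–Leibler divergence KL(q ‖ p) is finite. Then log(∫ f dp) ≥ ∫ log(f) dq − KL(q ‖ p). -/
open MeasureTheory

/-- The Kullback–Leibler divergence `KL(q ‖ p) = ∫ log(dq/dp) dq`, for `q ≪ p`. -/
noncomputable def klDiv {X : Type*} [MeasurableSpace X] (q p : Measure X) : ℝ :=
  ∫ x, llr q p x ∂q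

/-- Evidence Lower Bound: for probability measures `q ≪ p`, a measurable positive function
`f` that is `p`-integrable with `log ∘ f` `q`-integrable, and finite `KL(q ‖ p)` (i.e. the
log-likelihood ratio is `q`-integrable), one has `log(∫ f dp) ≥ ∫ log f dq − KL(q ‖ p)`. -/
theorem evidence_lower_bound {X : Type*} [MeasurableSpace X]
    (p q : Measure X) [IsProbabilityMeasure p] [IsProbabilityMeasure q]
    (hac : q ≪ p)
    (f : X → ℝ) (hf : Measurable f) (hfpos : ∀ x, 0 < f x)
    (hfp : Integrable f p)
    (hlog : Integrable (fun x => Real.log (f x)) q)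
    (hkl : Integrable (llr q p) q) :
    (∫ x, Real.log (f x) ∂q) - klDiv q p ≤ Real.log (∫ x, f x ∂p) := by
  set g : X → ℝ := fun x => f x * ((q.rnDeriv p x).toReal)⁻¹ with hg
  set h : X → ℝ := fun x => Real.log (f x) - llr q p x with hh
  have hpos : ∀ᵐ x ∂q, 0 < q.rnDeriv p x := Measure.rnDeriv_pos hac
  have hlt : ∀ᵐ x ∂q, q.rnDeriv p x < ⊤ := hac.ae_le (Measure.rnDeriv_lt_top q p)
  -- a.e. `exp (h x) = g x`
  have hexp : ∀ᵐ x ∂q, Real.exp (h x) = g x := by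
    filter_upwards [hpos, hlt] with x h0 h1
    have ht0 : 0 < (q.rnDeriv p x).toReal := ENNReal.toReal_pos h0.ne' h1.ne
    simp only [hh, hg, llr, Real.exp_sub, Real.exp_log (hfpos x), Real.exp_log ht0]
    rw [div_eq_mul_inv]
  have hgmeas : Measurable g := hf.mul (Measure.measurable_rnDeriv q p).ennreal_toReal.inv
  -- integrability of `g` w.r.t. `q`
  have hgint : Integrable g q := by
    rw [← integrable_rnDeriv_smul_iff hac]
    refine Integrable.mono hfp ?_ ?_
    · exact (((Measure.measurable_rnDeriv q p).ennreal_toReal.smul hgmeas)).aestronglyMeasurable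
    · refine Filter.Eventually.of_forall fun x => ?_
      simp only [smul_eq_mul, hg, Real.norm_eq_abs]
      rw [mul_comm (f x), ← mul_assoc]
      rcases eq_or_ne ((q.rnDeriv p x).toReal) 0 with h0 | h0
      · simp [h0, abs_of_pos (hfpos x), (hfpos x).le]
      · rw [mul_inv_cancel₀ h0, one_mul]
  have hhint : Integrable h q := hlog.sub hkl
  -- Jensen: `exp (∫ h dq) ≤ ∫ exp (h) dq = ∫ g dq`
  have hjensen : Real.exp (∫ x, h x ∂q) ≤ ∫ x, g x ∂q := by
    have := convexOn_exp.map_integral_le (by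
        exact Real.continuous_exp.continuousOn) isClosed_univ
        (Filter.Eventually.of_forall fun x => Set.mem_univ (h x)) hhint
        (hgint.congr (hexp.mono fun x hx => hx.symm))
    refine this.trans_eq ?_
    exact integral_congr_ae hexp
  -- `∫ g dq ≤ ∫ f dp`
  have hgf : ∫ x, g x ∂q ≤ ∫ x, f x ∂p := by
    rw [← integral_rnDeriv_smul hac]
    refine integral_mono ((integrable_rnDeriv_smul_iff hac).2 hgint) hfp fun x => ?_
    simp only [smul_eq_mul, hg]
    rw [mul_comm (f x), ← mul_assoc]
    rcases eq_or_ne ((q.rnDeriv p x).toReal) 0 with h0 | h0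
    · simp [h0, (hfpos x).le]
    · rw [mul_inv_cancel₀ h0, one_mul]
  have hexp_pos : (0:ℝ) < Real.exp (∫ x, h x ∂q) := Real.exp_pos _
  have : ∫ x, h x ∂q ≤ Real.log (∫ x, f x ∂p) := by
    calc ∫ x, h x ∂q = Real.log (Real.exp (∫ x, h x ∂q)) := (Real.log_exp _).symm
    _ ≤ Real.log (∫ x, f x ∂p) := Real.log_le_log hexp_pos (hjensen.trans hgf)
  rwa [klDiv, ← integral_sub hlog hkl]
end

section
/- (Median of the chi-squared distribution is below its mean.) For every natural number ν ≥ 1, the chi-squared distribution with ν degrees of freedom, i.e., the Gamma distribution with shape parameter ν/2 and rate parameter 1/2, assigns probability strictly greater than 1/2 to the interval (−∞, ν): if X ~ χ²_ν then P(X < ν) > 1/2. -/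
/-!
Write `m = a / r` for the mean of the Gamma(a, r) law with density `p`. The inversion
`u ↦ m² / u` maps `(m, ∞)` onto `(0, m)`, so `P(0 < X < m) = ∫_{u > m} (m² / u²) p(m² / u) du`.
With `w = u / m > 1`, the ratio of this integrand to `p(u)` is `exp (a (w - w⁻¹ - 2 log w)) > 1`,
hence `P(X ≥ m) = P(X > m) < P(0 < X < m) ≤ P(X < m)`.
-/

open MeasureTheory ProbabilityTheory Real Set
open scoped ENNReal

lemma two_mul_log_lt_sub_inv {w : ℝ} (hw : 1 < w) : 2 * log w < w - w⁻¹ := by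
  have h := self_lt_sinh_iff.mpr (log_pos hw)
  rw [sinh_log (by linarith)] at h
  linarith

lemma half_lt_measure_of_measure_compl_lt {α : Type*} [MeasurableSpace α] {μ : Measure α}
    [IsProbabilityMeasure μ] {s : Set α} (hs : MeasurableSet s) (h : μ sᶜ < μ s) :
    1 / 2 < μ s := by
  refine ENNReal.div_lt_of_lt_mul' ?_
  calc 1 = μ s + μ sᶜ := (prob_add_prob_compl hs).symm
    _ < μ s + μ s := ENNReal.add_lt_add_left (measure_ne_top μ s) h
    _ = 2 * μ s := (two_mul _).symm

lemma lintegral_Ioo_zero_eq_lintegral_Ioi_inversion {m : ℝ} (hm : 0 < m) (g : ℝ → ℝ≥0∞) :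
    ∫⁻ x in Ioo 0 m, g x = ∫⁻ u in Ioi m, ENNReal.ofReal (m ^ 2 / u ^ 2) * g (m ^ 2 / u) := by
  have himage : (fun u => m ^ 2 / u) '' Ioi m = Ioo 0 m := by
    ext x
    constructor
    · rintro ⟨u, hu : m < u, rfl⟩
      have hu0 : 0 < u := hm.trans hu
      refine ⟨by positivity, ?_⟩
      rw [div_lt_iff₀ hu0]
      nlinarith
    · rintro ⟨hx0, hx⟩
      refine ⟨m ^ 2 / x, ?_, div_div_cancel₀ (by positivity)⟩
      rw [mem_Ioi, lt_div_iff₀ hx0]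
      nlinarith
  have hderiv : ∀ u ∈ Ioi m,
      HasDerivWithinAt (fun u => m ^ 2 / u) (-(m ^ 2 / u ^ 2)) (Ioi m) u := by
    intro u (hu : m < u)
    have h := ((hasDerivAt_inv (hm.trans hu).ne').const_mul (m ^ 2)).hasDerivWithinAt (s := Ioi m)
    simpa only [← div_eq_mul_inv, mul_neg] using h
  have hinj : InjOn (fun u => m ^ 2 / u) (Ioi m) := fun _ _ _ _ h =>
    inv_injective (mul_left_cancel₀ (pow_ne_zero 2 hm.ne') h)
  rw [← himage, lintegral_image_eq_lintegral_abs_deriv_mul measurableSet_Ioi hderiv hinj]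
  refine setLIntegral_congr_fun measurableSet_Ioi fun u _ => ?_
  rw [abs_neg, abs_of_nonneg (by positivity)]

lemma gammaPDFReal_lt_inversion {a r u : ℝ} (ha : 0 < a) (hr : 0 < r) (hu : a / r < u) :
    gammaPDFReal a r u < (a / r) ^ 2 / u ^ 2 * gammaPDFReal a r ((a / r) ^ 2 / u) := by
  set m := a / r with hm_def
  have hm : 0 < m := div_pos ha hr
  have hu0 : 0 < u := hm.trans hu
  have hv0 : 0 < m ^ 2 / u := by positivity
  have hlog : 2 * (log u - log m) < u / m - m / u := by
    have := two_mul_log_lt_sub_inv ((one_lt_div hm).mpr hu)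
    rwa [log_div hu0.ne' hm.ne', inv_div] at this
  have hrate : r * u - r * (m ^ 2 / u) = a * (u / m - m / u) := by
    rw [hm_def]; field_simp
  have hexponent : log u * (a - 1) + -(r * u) <
      log (m ^ 2 / u ^ 2) + (log (m ^ 2 / u) * (a - 1) + -(r * (m ^ 2 / u))) := by
    rw [log_div (by positivity) (by positivity), log_div (by positivity) hu0.ne', log_pow, log_pow]
    push_cast
    linarith [mul_lt_mul_of_pos_left hlog ha]
  have hC : 0 < r ^ a / Gamma a := by have := Gamma_pos_of_pos ha; positivity
  have h := mul_lt_mul_of_pos_left (exp_lt_exp.mpr hexponent) hC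
  rw [exp_add, exp_add, exp_add, exp_log (by positivity), ← rpow_def_of_pos hu0,
    ← rpow_def_of_pos hv0] at h
  simp only [gammaPDFReal, if_pos hu0.le, if_pos hv0.le]
  linarith

lemma gammaMeasure_Ioi_mean_lt_Ioo {a r : ℝ} (ha : 0 < a) (hr : 0 < r) :
    gammaMeasure a r (Ioi (a / r)) < gammaMeasure a r (Ioo 0 (a / r)) := by
  have hm : 0 < a / r := div_pos ha hr
  rw [gammaMeasure, withDensity_apply _ measurableSet_Ioi, withDensity_apply _ measurableSet_Ioo,
    lintegral_Ioo_zero_eq_lintegral_Ioi_inversion hm]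
  refine setLIntegral_strict_mono measurableSet_Ioi (by simp) (by unfold gammaPDF; fun_prop) ?_
    (ae_of_all _ fun u (hu : a / r < u) => ?_)
  · refine ((setLIntegral_le_lintegral _ _).trans_lt ?_).ne
    simp [lintegral_gammaPDF_eq_one ha hr]
  · have hu0 : 0 < u := hm.trans hu
    have hv : 0 < gammaPDFReal a r ((a / r) ^ 2 / u) := gammaPDFReal_pos ha hr (by positivity)
    rw [gammaPDF, gammaPDF, ← ENNReal.ofReal_mul (by positivity)]
    exact (ENNReal.ofReal_lt_ofReal_iff (by positivity)).mpr (gammaPDFReal_lt_inversion ha hr hu)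

theorem half_lt_gammaMeasure_Iio_mean {a r : ℝ} (ha : 0 < a) (hr : 0 < r) :
    1 / 2 < gammaMeasure a r (Iio (a / r)) := by
  have := isProbabilityMeasure_gammaMeasure ha hr
  have hac : gammaMeasure a r ≪ volume := withDensity_absolutelyContinuous _ _
  refine half_lt_measure_of_measure_compl_lt measurableSet_Iio ?_
  calc gammaMeasure a r (Iio (a / r))ᶜ = gammaMeasure a r (Ioi (a / r)) := by
        rw [compl_Iio]; exact measure_congr (hac.ae_eq Ioi_ae_eq_Ici).symm
    _ < gammaMeasure a r (Ioo 0 (a / r)) := gammaMeasure_Ioi_mean_lt_Ioo ha hr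
    _ ≤ gammaMeasure a r (Iio (a / r)) := measure_mono Ioo_subset_Iio_self

/-- The median of the chi-squared distribution lies below its mean: for `ν ≥ 1`, the
chi-squared distribution with `ν` degrees of freedom (the Gamma distribution with shape
`ν/2` and rate `1/2`) assigns probability strictly greater than `1/2` to `(−∞, ν)`. -/
theorem chiSq_prob_lt_mean_gt_half (ν : ℕ) (hν : 1 ≤ ν) :
    1 / 2 < gammaMeasure ((ν : ℝ) / 2) (1 / 2) (Set.Iio (ν : ℝ)) := by
  have hν0 : (0 : ℝ) < ν := by exact_mod_cast hν
  have h := half_lt_gammaMeasure_Iio_mean (half_pos hν0) one_half_pos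
  rwa [div_div_div_cancel_right₀ two_ne_zero, div_one] at h
end
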